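/- For every real x₁ > 0, ∫_{1/2}^∞ (4πz√(2z-1))⁻¹ e^{-x₁² z} dz = (1/2)·(1-Φ(x₁)), where Φ is the standard normal CDF. -/

import Mathlib

/-!
Substituting `z = (1 + u²) / 2` turns the integral into
`(2π)⁻¹ ∫₀^∞ e^{-(1 + u²) x² / 2} / (1 + u²) du`.
Writing `e^{-c x²} / (2c) = ∫ₓ^∞ s e^{-c s²} ds` and swapping the two integrals, the inner
`u`-integral is a half-line Gaussian integral equal to `π` times the standard normal density
at `s`, so the double integral is `π (1 - Φ(x))`.
-/

open Real MeasureTheory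

/-- The standard normal CDF. -/
noncomputable def stdNormalCDF (t : ℝ) : ℝ :=
  ∫ s in Set.Iic t, (Real.sqrt (2 * Real.pi))⁻¹ * Real.exp (-s ^ 2 / 2)

open Set Filter Topology ProbabilityTheory

lemma stdNormalPDF_eq_gaussianPDFReal (s : ℝ) :
    (√(2 * π))⁻¹ * exp (-s ^ 2 / 2) = gaussianPDFReal 0 1 s := by
  simp [gaussianPDFReal]

lemma one_sub_stdNormalCDF (x : ℝ) :
    1 - stdNormalCDF x = ∫ s in Ioi x, (√(2 * π))⁻¹ * exp (-s ^ 2 / 2) := by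
  simp only [stdNormalCDF, stdNormalPDF_eq_gaussianPDFReal]
  have hint := integrable_gaussianPDFReal 0 1
  rw [← integral_gaussianPDFReal_eq_one 0 one_ne_zero,
    ← intervalIntegral.integral_Iic_add_Ioi hint.integrableOn hint.integrableOn,
    add_sub_cancel_left]

lemma integral_Ioi_mul_exp_neg_mul_sq {c : ℝ} (hc : 0 < c) (a : ℝ) :
    ∫ s in Ioi a, s * exp (-c * s ^ 2) = exp (-c * a ^ 2) / (2 * c) := by
  have hderiv (s : ℝ) :
      HasDerivAt (fun s ↦ -exp (-c * s ^ 2) / (2 * c)) (s * exp (-c * s ^ 2)) s := by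
    refine ((((hasDerivAt_pow 2 s).const_mul (-c)).exp).fun_neg.div_const (2 * c)).congr_deriv ?_
    field_simp
    ring
  have hlim : Tendsto (fun s ↦ -exp (-c * s ^ 2) / (2 * c)) atTop (𝓝 0) := by
    have := (tendsto_exp_atBot.comp ((tendsto_pow_atTop two_ne_zero).const_mul_atTop_of_neg
      (neg_lt_zero.mpr hc))).neg.div_const (2 * c)
    simpa [Function.comp_def] using this
  rw [integral_Ioi_of_hasDerivAt_of_tendsto' (fun s _ ↦ hderiv s)
    (integrable_mul_exp_neg_mul_sq hc).integrableOn hlim]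
  ring

lemma integral_Ioi_half_eq_integral_Ioi_zero_smul {E : Type*} [NormedAddCommGroup E]
    [NormedSpace ℝ E] (f : ℝ → E) :
    ∫ z in Ioi (1 / 2 : ℝ), f z = ∫ u in Ioi 0, u • f ((1 + u ^ 2) / 2) := by
  have himage : (fun u : ℝ ↦ (1 + u ^ 2) / 2) '' Ioi 0 = Ioi (1 / 2) := by
    ext z
    simp only [mem_image, mem_Ioi]
    constructor
    · rintro ⟨u, hu, rfl⟩
      nlinarith
    · intro hz
      refine ⟨√(2 * z - 1), sqrt_pos.mpr (by linarith), ?_⟩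
      rw [sq_sqrt (by linarith)]
      ring
  have hderiv : ∀ u ∈ Ioi (0 : ℝ),
      HasDerivWithinAt (fun u : ℝ ↦ (1 + u ^ 2) / 2) u (Ioi 0) u := fun u _ ↦ by
    simpa using (((hasDerivAt_pow 2 u).const_add 1).div_const 2).hasDerivWithinAt
  have hinj : InjOn (fun u : ℝ ↦ (1 + u ^ 2) / 2) (Ioi 0) := fun a ha b hb hab ↦ by
    simp only [mem_Ioi] at ha hb
    nlinarith
  rw [← himage, integral_image_eq_integral_abs_deriv_smul measurableSet_Ioi hderiv hinj]
  refine setIntegral_congr_fun measurableSet_Ioi fun u hu ↦ ?_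
  rw [abs_of_pos hu]

lemma integral_Ioi_zero_mul_exp_neg_one_add_sq_mul_sq {s : ℝ} (hs : 0 < s) :
    ∫ u in Ioi (0 : ℝ), s * exp (-((1 + u ^ 2) / 2) * s ^ 2) =
      π * ((√(2 * π))⁻¹ * exp (-s ^ 2 / 2)) := by
  have hsplit (u : ℝ) : s * exp (-((1 + u ^ 2) / 2) * s ^ 2) =
      s * exp (-s ^ 2 / 2) * exp (-(s ^ 2 / 2) * u ^ 2) := by
    rw [mul_assoc, ← exp_add]
    ring_nf
  have hsqrt : √(π / (s ^ 2 / 2)) = √(2 * π) / s := by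
    rw [show π / (s ^ 2 / 2) = 2 * π / s ^ 2 by ring, sqrt_div' _ (sq_nonneg s), sqrt_sq hs.le]
  have hsqrt_sq : √(2 * π) * √(2 * π) = 2 * π := mul_self_sqrt (by positivity)
  simp_rw [hsplit]
  rw [integral_const_mul, integral_gaussian_Ioi, hsqrt]
  field_simp
  linarith

lemma integrable_mul_exp_neg_one_add_sq_mul_sq {x : ℝ} (hx : 0 ≤ x) :
    Integrable (Function.uncurry fun u s : ℝ ↦ s * exp (-((1 + u ^ 2) / 2) * s ^ 2))
      ((volume.restrict (Ioi 0)).prod (volume.restrict (Ioi x))) := by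
  have hc (u : ℝ) : 0 < (1 + u ^ 2) / 2 := by positivity
  have hnorm (u : ℝ) : ∫ s in Ioi x, ‖s * exp (-((1 + u ^ 2) / 2) * s ^ 2)‖ =
      exp (-((1 + u ^ 2) / 2) * x ^ 2) / (1 + u ^ 2) := by
    have hint := integral_Ioi_mul_exp_neg_mul_sq (hc u) x
    rw [show 2 * ((1 + u ^ 2) / 2) = 1 + u ^ 2 by ring] at hint
    rw [← hint]
    refine setIntegral_congr_fun measurableSet_Ioi fun s hs ↦ ?_
    exact norm_of_nonneg (mul_nonneg (hx.trans (le_of_lt hs)) (exp_nonneg _))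
  rw [integrable_prod_iff (by fun_prop)]
  refine ⟨.of_forall fun u ↦ (integrable_mul_exp_neg_mul_sq (hc u)).integrableOn, ?_⟩
  simp only [Function.uncurry_apply_pair, hnorm]
  refine integrable_inv_one_add_sq.integrableOn.mono'
    (by fun_prop : Measurable _).aestronglyMeasurable (.of_forall fun u ↦ ?_)
  rw [norm_of_nonneg (by positivity), div_eq_mul_inv]
  refine mul_le_of_le_one_left (by positivity) (exp_le_one_iff.mpr ?_)
  nlinarith [hc u, sq_nonneg x]

-- `(2π)⁻¹` times the left side is Owen's `T(x, ∞)`.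
lemma integral_Ioi_zero_exp_div_one_add_sq {x : ℝ} (hx : 0 ≤ x) :
    ∫ u in Ioi (0 : ℝ), exp (-((1 + u ^ 2) / 2) * x ^ 2) / (1 + u ^ 2) =
      π * (1 - stdNormalCDF x) := by
  have hinner (u : ℝ) : exp (-((1 + u ^ 2) / 2) * x ^ 2) / (1 + u ^ 2) =
      ∫ s in Ioi x, s * exp (-((1 + u ^ 2) / 2) * s ^ 2) := by
    rw [integral_Ioi_mul_exp_neg_mul_sq (by positivity)]
    ring
  simp_rw [hinner]
  rw [integral_integral_swap (integrable_mul_exp_neg_one_add_sq_mul_sq hx), one_sub_stdNormalCDF,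
    ← integral_const_mul]
  exact setIntegral_congr_fun measurableSet_Ioi fun s hs ↦
    integral_Ioi_zero_mul_exp_neg_one_add_sq_mul_sq (hx.trans_lt hs)

theorem laplace_transform_identity (x₁ : ℝ) (hx : 0 < x₁) :
    (∫ z in Set.Ioi (1 / 2 : ℝ),
        (4 * Real.pi * z * Real.sqrt (2 * z - 1))⁻¹ * Real.exp (-(x₁ ^ 2 * z))) =
      (1 / 2) * (1 - stdNormalCDF x₁) := by
  have hintegrand : ∀ u ∈ Ioi (0 : ℝ), u • ((4 * π * ((1 + u ^ 2) / 2) *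
      √(2 * ((1 + u ^ 2) / 2) - 1))⁻¹ * exp (-(x₁ ^ 2 * ((1 + u ^ 2) / 2)))) =
      (2 * π)⁻¹ * (exp (-((1 + u ^ 2) / 2) * x₁ ^ 2) / (1 + u ^ 2)) :=
      fun u (hu : 0 < u) ↦ by
    rw [show 2 * ((1 + u ^ 2) / 2) - 1 = u ^ 2 by ring, sqrt_sq hu.le, smul_eq_mul]
    field_simp [hu.ne']
    norm_num
  rw [integral_Ioi_half_eq_integral_Ioi_zero_smul,
    setIntegral_congr_fun measurableSet_Ioi hintegrand, integral_const_mul,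
    integral_Ioi_zero_exp_div_one_add_sq hx.le]
  field_simp
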